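/- arXiv:2312.00994 — 6 statements merged into one kernel-verified Lean document; each statement's English description precedes it below -/
import Mathlib

section
/- For any real numbers a_1 ≥ a_2 ≥ ... ≥ a_n ≥ 0 and b_1 ≥ b_2 ≥ ... ≥ b_n ≥ 0 and any permutation π of {1,...,n}, ∏_{i=1}^n (a_i + b_{π(i)}) ≤ ∏_{i=1}^n (a_i + b_{n−i+1}). -/
open BigOperators

/-- Rearrangement inequality: for non-increasing nonnegative tuples `a`, `b`
and any permutation `π`, `∏ i (a i + b (π i)) ≤ ∏ i (a i + b (rev i))`. -/
theorem prod_add_perm_le_prod_add_rev (n : ℕ) (a b : Fin n → ℝ)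
    (ha : Antitone a) (hb : Antitone b)
    (ha0 : ∀ i, 0 ≤ a i) (hb0 : ∀ i, 0 ≤ b i) (π : Equiv.Perm (Fin n)) :
    ∏ i : Fin n, (a i + b (π i)) ≤ ∏ i : Fin n, (a i + b i.rev) := by
  suffices H : ∀ N (π : Equiv.Perm (Fin n)),
      (Finset.univ.filter fun k => π k ≠ Fin.rev k).card ≤ N →
      ∏ i : Fin n, (a i + b (π i)) ≤ ∏ i : Fin n, (a i + b i.rev) from
    H _ π le_rfl
  intro N
  induction N with
  | zero =>
    intro π hπ
    have hall : ∀ k, π k = Fin.rev k := by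
      intro k
      by_contra hk
      have hm : k ∈ Finset.univ.filter fun k => π k ≠ Fin.rev k := by simp [hk]
      have := Finset.card_pos.mpr ⟨k, hm⟩
      omega
    simp only [hall]
    exact le_refl _
  | succ N ih =>
    intro π hπ
    by_cases hall : ∀ k, π k = Fin.rev k
    · simp only [hall]; exact le_refl _
    · push_neg at hall
      set S := Finset.univ.filter fun k => π k ≠ Fin.rev k with hS
      have hSne : S.Nonempty := ⟨hall.choose, by simp [hS, hall.choose_spec]⟩
      set i := S.min' hSne with hi
      have hiS : i ∈ S := S.min'_mem hSne
      have hiπ : π i ≠ Fin.rev i := by simpa [hS] using hiS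
      have hmin : ∀ k, π k ≠ Fin.rev k → i ≤ k := fun k hk =>
        S.min'_le k (by simp [hS, hk])
      have hagree : ∀ k, k < i → π k = Fin.rev k := by
        intro k hk; by_contra h; exact absurd (hmin k h) (not_le.mpr hk)
      have hπi_lt : π i < Fin.rev i := by
        rcases lt_trichotomy (π i) (Fin.rev i) with h | h | h
        · exact h
        · exact absurd h hiπ
        · exfalso
          have hk : Fin.rev (π i) < i := by
            have h2 : Fin.rev (π i) < Fin.rev (Fin.rev i) := by
              exact Fin.rev_lt_rev.mpr h
            simpa using h2
          have h3 := hagree _ hk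
          rw [Fin.rev_rev] at h3
          exact absurd (π.injective h3) (ne_of_lt hk)
      set j := π.symm (Fin.rev i) with hj
      have hπj : π j = Fin.rev i := π.apply_symm_apply _
      have hij : i < j := by
        rcases lt_trichotomy i j with h | h | h
        · exact h
        · exfalso; rw [← h] at hπj; exact hiπ hπj
        · exfalso
          have := hagree j h
          rw [hπj] at this
          exact absurd (Fin.rev_injective this.symm) (ne_of_lt h)
      have hji_ne : j ≠ i := (ne_of_lt hij).symm
      set σ := π * Equiv.swap i j with hσ
      have hσi : σ i = π j := by simp [hσ, Equiv.swap_apply_left]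
      have hσj : σ j = π i := by simp [hσ, Equiv.swap_apply_right]
      have hσk : ∀ k, k ≠ i → k ≠ j → σ k = π k := by
        intro k h1 h2
        simp [hσ, Equiv.swap_apply_of_ne_of_ne h1 h2]
      -- split products at i and j
      have hsplit : ∀ (c : Fin n → ℝ), ∏ k, c k =
          c i * (c j * ∏ k ∈ (Finset.univ.erase i).erase j, c k) := by
        intro c
        rw [Finset.mul_prod_erase _ _
          (Finset.mem_erase.mpr ⟨hji_ne, Finset.mem_univ j⟩),
          Finset.mul_prod_erase _ _ (Finset.mem_univ i)]
      have hrest_eq : ∏ k ∈ (Finset.univ.erase i).erase j, (a k + b (π k)) =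
          ∏ k ∈ (Finset.univ.erase i).erase j, (a k + b (σ k)) := by
        apply Finset.prod_congr rfl
        intro k hk
        simp only [Finset.mem_erase] at hk
        rw [hσk k hk.2.1 hk.1]
      have hrest_nonneg : 0 ≤ ∏ k ∈ (Finset.univ.erase i).erase j, (a k + b (π k)) :=
        Finset.prod_nonneg fun k _ => add_nonneg (ha0 k) (hb0 _)
      have haij : a j ≤ a i := ha hij.le
      have hbij : b (π j) ≤ b (π i) := by
        rw [hπj]; exact hb hπi_lt.le
      have hkey : (a i + b (π i)) * (a j + b (π j)) ≤
          (a i + b (σ i)) * (a j + b (σ j)) := by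
        rw [hσi, hσj]
        nlinarith [mul_nonneg (sub_nonneg.mpr haij) (sub_nonneg.mpr hbij)]
      have step1 : ∏ k : Fin n, (a k + b (π k)) ≤ ∏ k : Fin n, (a k + b (σ k)) := by
        rw [hsplit (fun k => a k + b (π k)), hsplit (fun k => a k + b (σ k))]
        rw [← hrest_eq]
        calc (a i + b (π i)) * ((a j + b (π j)) * ∏ k ∈ (Finset.univ.erase i).erase j, (a k + b (π k)))
            = ((a i + b (π i)) * (a j + b (π j))) * ∏ k ∈ (Finset.univ.erase i).erase j, (a k + b (π k)) := by ring
          _ ≤ ((a i + b (σ i)) * (a j + b (σ j))) * ∏ k ∈ (Finset.univ.erase i).erase j, (a k + b (π k)) := by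
              exact mul_le_mul_of_nonneg_right hkey hrest_nonneg
          _ = (a i + b (σ i)) * ((a j + b (σ j)) * ∏ k ∈ (Finset.univ.erase i).erase j, (a k + b (π k))) := by ring
      -- card bound for σ
      have hsub : (Finset.univ.filter fun k => σ k ≠ Fin.rev k) ⊆ S.erase i := by
        intro k hk
        simp only [Finset.mem_filter, Finset.mem_univ, true_and] at hk
        have hki : k ≠ i := by
          intro h; rw [h, hσi, hπj] at hk; exact hk rfl
        refine Finset.mem_erase.mpr ⟨hki, ?_⟩
        simp only [hS, Finset.mem_filter, Finset.mem_univ, true_and]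
        by_cases hkj : k = j
        · rw [hkj, hπj]
          intro h
          exact hji_ne (Fin.rev_injective h.symm)
        · rwa [hσk k hki hkj] at hk
      have hcard : (Finset.univ.filter fun k => σ k ≠ Fin.rev k).card ≤ N := by
        have h1 := Finset.card_le_card hsub
        have h2 : (S.erase i).card = S.card - 1 := Finset.card_erase_of_mem hiS
        have h3 : 1 ≤ S.card := Finset.card_pos.mpr hSne
        have h4 : S.card ≤ N + 1 := hπ
        omega
      exact step1.trans (ih σ hcard)
end

section
/- Let n ≥ 1, let 0 ≤ ℓ ≤ n be an integer, let C ≥ 0, and let A, B ∈ ℂ^{n×n} with ‖A‖_F ≤ n, ‖B‖_F ≤ C·n, and rank(B) ≤ ℓ. Then |det(A + B)| ≤ (n^n / ((n−ℓ)^{(n−ℓ)/2} · ℓ^{ℓ/2})) · (1 + C)^ℓ, with the convention 0^0 = 1. -/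
open Matrix BigOperators

/-- The Frobenius norm of a complex matrix. -/
noncomputable def frobNorm {n : ℕ} (M : Matrix (Fin n) (Fin n) ℂ) : ℝ :=
  Real.sqrt (∑ i : Fin n, ∑ j : Fin n, ‖M i j‖ ^ 2)

open Finset Module
open scoped ComplexOrder

/-!
Since `rank B ≤ ℓ`, there is a unitary `U` with `n - ℓ` of its columns in `ker B`. Then
`|det (A + B)| = |det ((A + B) U)|`, and Hadamard's inequality bounds this by the product of the
column norms of `(A + B) U`. The `n - ℓ` columns in `ker B` are columns of `A U`, so their squared
norms sum to at most `‖A‖_F² ≤ n²`; the other `ℓ` squared norms sum to at most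
`‖A + B‖_F² ≤ (1 + C)² n²`. AM-GM on each of the two groups gives the bound.
-/

theorem Real.prod_le_div_card_pow_of_sum_le {ι : Type*} {s : Finset ι} {f : ι → ℝ} {a : ℝ}
    (hf : ∀ i ∈ s, 0 ≤ f i) (ha : ∑ i ∈ s, f i ≤ a) :
    ∏ i ∈ s, f i ≤ (a / #s) ^ #s := by
  rcases s.eq_empty_or_nonempty with rfl | hs
  · simp
  have hcard : (0 : ℝ) < #s := by exact_mod_cast hs.card_pos
  have amgm := Real.geom_mean_le_arith_mean s (fun _ ↦ 1) f (fun _ _ ↦ zero_le_one)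
    (by simpa using hcard) hf
  simp only [Real.rpow_one, sum_const, nsmul_eq_mul, mul_one, one_mul] at amgm
  calc ∏ i ∈ s, f i = ((∏ i ∈ s, f i) ^ (#s : ℝ)⁻¹) ^ #s := by
        rw [← Real.rpow_natCast, ← Real.rpow_mul (prod_nonneg hf), inv_mul_cancel₀ hcard.ne',
          Real.rpow_one]
    _ ≤ ((∑ i ∈ s, f i) / #s) ^ #s := by gcongr; exact Real.rpow_nonneg (prod_nonneg hf) _
    _ ≤ (a / #s) ^ #s := by have := sum_nonneg hf; gcongr

theorem Submodule.exists_orthonormalBasis_apply_mem {𝕜 E ι : Type*} [RCLike 𝕜]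
    [NormedAddCommGroup E] [InnerProductSpace 𝕜 E] [FiniteDimensional 𝕜 E] [Fintype ι]
    (K : Submodule 𝕜 E) (hι : finrank 𝕜 E = Fintype.card ι) {s : Finset ι}
    (hs : #s ≤ finrank 𝕜 K) : ∃ b : OrthonormalBasis ι 𝕜 E, ∀ i ∈ s, b i ∈ K := by
  classical
  let e : s ↪ Fin (finrank 𝕜 K) := s.equivFin.toEmbedding.trans (Fin.castLEEmb hs)
  let kb := stdOrthonormalBasis 𝕜 K
  let v : ι → E := fun i ↦ if h : i ∈ s then kb (e ⟨i, h⟩) else 0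
  have hv : (s : Set ι).domRestrict v = K.subtypeₗᵢ ∘ kb ∘ e := by
    funext ⟨i, hi⟩
    exact dif_pos hi
  have hon : Orthonormal 𝕜 ((s : Set ι).domRestrict v) := by
    rw [hv]
    exact (kb.orthonormal.comp e e.injective).comp_linearIsometry K.subtypeₗᵢ
  obtain ⟨b, hb⟩ := hon.exists_orthonormalBasis_extension_of_card_eq hι
  refine ⟨b, fun i hi ↦ ?_⟩
  rw [hb i hi]
  simp [v, hi]

namespace Matrix

variable {𝕜 ι : Type*} [RCLike 𝕜] [Fintype ι]

theorem det_conjTranspose_mul_self [DecidableEq ι] (N : Matrix ι ι 𝕜) :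
    (Nᴴ * N).det = ((‖N.det‖ ^ 2 : ℝ) : 𝕜) := by
  rw [det_mul, det_conjTranspose, RCLike.star_def, RCLike.conj_mul, RCLike.ofReal_pow]

theorem trace_conjTranspose_mul_self (N : Matrix ι ι 𝕜) :
    (Nᴴ * N).trace = ((∑ i, ∑ j, ‖N j i‖ ^ 2 : ℝ) : 𝕜) := by
  simp only [trace, diag_apply, mul_apply, conjTranspose_apply, RCLike.star_def, RCLike.conj_mul]
  push_cast
  rfl

theorem norm_det_le_one_of_col_norm_sq_eq_one [DecidableEq ι] {N : Matrix ι ι 𝕜}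
    (hN : ∀ i, ∑ j, ‖N j i‖ ^ 2 = 1) : ‖N.det‖ ≤ 1 := by
  have hG : (Nᴴ * N).PosSemidef := posSemidef_conjTranspose_mul_self N
  have hsum : ∑ i, hG.1.eigenvalues i = Fintype.card ι := by
    have := hG.1.trace_eq_sum_eigenvalues
    rw [trace_conjTranspose_mul_self, funext hN, sum_const, card_univ, nsmul_one] at this
    exact_mod_cast this.symm
  have hprod : ‖N.det‖ ^ 2 = ∏ i, hG.1.eigenvalues i := by
    have := hG.1.det_eq_prod_eigenvalues
    rw [det_conjTranspose_mul_self] at this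
    exact_mod_cast this
  have amgm := Real.prod_le_div_card_pow_of_sum_le (s := univ) (fun i _ ↦ hG.eigenvalues_nonneg i)
    hsum.le
  rw [← hprod, card_univ] at amgm
  have hone : ((Fintype.card ι : ℝ) / Fintype.card ι) ^ Fintype.card ι = 1 := by
    rcases Nat.eq_zero_or_pos (Fintype.card ι) with h | h
    · simp [h]
    · rw [div_self (by positivity), one_pow]
  rw [hone] at amgm
  exact (sq_le_one_iff₀ (norm_nonneg _)).mp amgm

theorem norm_det_le_prod_sqrt_col_norm_sq [DecidableEq ι] (N : Matrix ι ι 𝕜) :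
    ‖N.det‖ ≤ ∏ i, √(∑ j, ‖N j i‖ ^ 2) := by
  by_cases hzero : ∃ i, ∑ j, ‖N j i‖ ^ 2 = 0
  · obtain ⟨i, hi⟩ := hzero
    have hcol : ∀ j, N j i = 0 := fun j ↦ by
      simpa using (sum_eq_zero_iff_of_nonneg fun j _ ↦ sq_nonneg ‖N j i‖).mp hi j (mem_univ j)
    rw [det_eq_zero_of_column_eq_zero i hcol, norm_zero]
    positivity
  push Not at hzero
  set c : ι → ℝ := fun i ↦ √(∑ j, ‖N j i‖ ^ 2)
  have hc : ∀ i, 0 < c i := fun i ↦ Real.sqrt_pos.mpr <|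
    (sum_nonneg fun j _ ↦ sq_nonneg ‖N j i‖).lt_of_ne' (hzero i)
  have hunit : ∀ i, ∑ j, ‖(N * diagonal fun i ↦ ((c i)⁻¹ : 𝕜)) j i‖ ^ 2 = 1 := fun i ↦ by
    simp only [mul_diagonal, norm_mul, mul_pow, ← sum_mul, norm_inv, RCLike.norm_ofReal,
      abs_of_pos (hc i), inv_pow, c, Real.sq_sqrt (sum_nonneg fun j _ ↦ sq_nonneg ‖N j i‖)]
    exact mul_inv_cancel₀ (hzero i)
  have := norm_det_le_one_of_col_norm_sq_eq_one hunit
  rw [det_mul, det_diagonal, norm_mul, norm_prod] at this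
  simp only [norm_inv, RCLike.norm_ofReal, abs_of_pos (hc _), prod_inv_distrib] at this
  simpa using (mul_inv_le_iff₀ (prod_pos fun i _ ↦ hc i)).mp this

theorem norm_det_sq_le_of_sum_col_norm_sq_le [DecidableEq ι] (N : Matrix ι ι 𝕜) (s : Finset ι)
    {a c : ℝ} (ha : ∑ i ∈ s, ∑ j, ‖N j i‖ ^ 2 ≤ a) (hc : ∑ i ∈ sᶜ, ∑ j, ‖N j i‖ ^ 2 ≤ c) :
    ‖N.det‖ ^ 2 ≤ (a / #s) ^ #s * (c / #sᶜ) ^ #sᶜ := by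
  have hcol : ∀ i, 0 ≤ ∑ j, ‖N j i‖ ^ 2 := fun i ↦ sum_nonneg fun j _ ↦ sq_nonneg _
  have amgm_s := Real.prod_le_div_card_pow_of_sum_le (fun i _ ↦ hcol i) ha
  have amgm_c := Real.prod_le_div_card_pow_of_sum_le (fun i _ ↦ hcol i) hc
  calc ‖N.det‖ ^ 2 ≤ (∏ i, √(∑ j, ‖N j i‖ ^ 2)) ^ 2 :=
        pow_le_pow_left₀ (norm_nonneg _) N.norm_det_le_prod_sqrt_col_norm_sq 2
    _ = ∏ i, ∑ j, ‖N j i‖ ^ 2 := by simp only [← prod_pow, Real.sq_sqrt (hcol _)]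
    _ = (∏ i ∈ s, ∑ j, ‖N j i‖ ^ 2) * ∏ i ∈ sᶜ, ∑ j, ‖N j i‖ ^ 2 :=
        (prod_mul_prod_compl s _).symm
    _ ≤ (a / #s) ^ #s * (c / #sᶜ) ^ #sᶜ :=
        mul_le_mul amgm_s amgm_c (prod_nonneg fun i _ ↦ hcol i)
          ((prod_nonneg fun i _ ↦ hcol i).trans amgm_s)

theorem exists_mem_unitaryGroup_mul_apply_eq_zero [DecidableEq ι] (B : Matrix ι ι 𝕜)
    {s : Finset ι} (hs : #s + B.rank ≤ Fintype.card ι) :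
    ∃ U ∈ unitaryGroup ι 𝕜, ∀ i ∈ s, ∀ j, (B * U) j i = 0 := by
  have hrank : B.rank + finrank 𝕜 (LinearMap.ker (toEuclideanLin B)) = Fintype.card ι := by
    rw [rank_eq_finrank_range_toLin B (PiLp.basisFun 2 𝕜 ι) (PiLp.basisFun 2 𝕜 ι)]
    exact (LinearMap.finrank_range_add_finrank_ker (toEuclideanLin B)).trans
      finrank_euclideanSpace
  obtain ⟨b, hb⟩ := (LinearMap.ker (toEuclideanLin B)).exists_orthonormalBasis_apply_mem
    finrank_euclideanSpace (s := s) (by omega)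
  refine ⟨(EuclideanSpace.basisFun ι 𝕜).toBasis.toMatrix b,
    (EuclideanSpace.basisFun ι 𝕜).toMatrix_orthonormalBasis_mem_unitary b, fun i hi j ↦ ?_⟩
  have := congrFun (congrArg WithLp.ofLp (LinearMap.mem_ker.mp (hb i hi))) j
  simpa [mul_apply, Basis.toMatrix_apply, toLpLin_apply, mulVec, dotProduct] using this

end Matrix

section FrobeniusNorm

variable {n : ℕ}

theorem frobNorm_nonneg (M : Matrix (Fin n) (Fin n) ℂ) : 0 ≤ frobNorm M :=
  Real.sqrt_nonneg _

theorem frobNorm_sq (M : Matrix (Fin n) (Fin n) ℂ) :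
    frobNorm M ^ 2 = ∑ i, ∑ j, ‖M i j‖ ^ 2 :=
  Real.sq_sqrt (by positivity)

theorem frobNorm_add_le (M N : Matrix (Fin n) (Fin n) ℂ) :
    frobNorm (M + N) ≤ frobNorm M + frobNorm N := by
  let := Matrix.frobeniusSeminormedAddCommGroup (m := Fin n) (n := Fin n) (α := ℂ)
  have hnorm : ∀ X : Matrix (Fin n) (Fin n) ℂ, frobNorm X = ‖X‖ := fun X ↦ by
    rw [frobenius_norm_def, frobNorm, Real.sqrt_eq_rpow]
    norm_cast
  simpa only [hnorm] using norm_add_le M N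

theorem frobNorm_mul_of_mem_unitaryGroup (M : Matrix (Fin n) (Fin n) ℂ)
    {U : Matrix (Fin n) (Fin n) ℂ} (hU : U ∈ unitaryGroup (Fin n) ℂ) :
    frobNorm (M * U) = frobNorm M := by
  have hsq : ∀ X : Matrix (Fin n) (Fin n) ℂ, ((frobNorm X ^ 2 : ℝ) : ℂ) = (X * Xᴴ).trace := by
    intro X
    simpa [frobNorm_sq, sum_comm (f := fun i j ↦ ‖X j i‖ ^ 2)] using
      (trace_conjTranspose_mul_self Xᴴ).symm
  have hMU : (M * U) * (M * U)ᴴ = M * Mᴴ := by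
    rw [conjTranspose_mul, mul_assoc, ← mul_assoc U, ← star_eq_conjTranspose,
      mem_unitaryGroup_iff.mp hU, one_mul]
  have := hsq (M * U)
  rw [hMU, ← hsq, Complex.ofReal_inj] at this
  exact (sq_eq_sq₀ (frobNorm_nonneg _) (frobNorm_nonneg _)).mp this

theorem sum_col_norm_sq_mul_le_frobNorm_sq (M : Matrix (Fin n) (Fin n) ℂ)
    {U : Matrix (Fin n) (Fin n) ℂ} (hU : U ∈ unitaryGroup (Fin n) ℂ) (s : Finset (Fin n)) :
    ∑ i ∈ s, ∑ j, ‖(M * U) j i‖ ^ 2 ≤ frobNorm M ^ 2 := by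
  calc ∑ i ∈ s, ∑ j, ‖(M * U) j i‖ ^ 2 ≤ ∑ i, ∑ j, ‖(M * U) j i‖ ^ 2 :=
        sum_le_sum_of_subset_of_nonneg (subset_univ s) fun i _ _ ↦ by positivity
    _ = frobNorm M ^ 2 := by rw [← frobNorm_mul_of_mem_unitaryGroup M hU, frobNorm_sq, sum_comm]

end FrobeniusNorm

theorem low_rank_bound_eq_div_sqrt_pow {n ℓ : ℕ} (hℓ : ℓ ≤ n) (C : ℝ) :
    (n : ℝ) ^ (n : ℝ) / (((n : ℝ) - ℓ) ^ (((n : ℝ) - ℓ) / 2) * (ℓ : ℝ) ^ ((ℓ : ℝ) / 2)) *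
        (1 + C) ^ ℓ =
      (n / √(n - ℓ : ℕ)) ^ (n - ℓ) * ((1 + C) * n / √ℓ) ^ ℓ := by
  obtain ⟨m, rfl⟩ := Nat.exists_eq_add_of_le' hℓ
  rw [Real.rpow_natCast, Nat.add_sub_cancel, Nat.cast_add, add_sub_cancel_right,
    Real.rpow_div_two_eq_sqrt _ m.cast_nonneg, Real.rpow_div_two_eq_sqrt _ ℓ.cast_nonneg,
    Real.rpow_natCast, Real.rpow_natCast, pow_add, div_pow, div_pow, mul_pow]
  ring

theorem div_sqrt_pow_sq (a : ℝ) (k : ℕ) : ((a / √k) ^ k) ^ 2 = (a ^ 2 / k) ^ k := by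
  rw [← pow_mul, mul_comm, pow_mul, div_pow, Real.sq_sqrt k.cast_nonneg]

theorem abs_det_add_le_of_low_rank_general (n : ℕ) (ℓ : ℕ) (hℓ : ℓ ≤ n)
    (C : ℝ) (hC : 0 ≤ C) (A B : Matrix (Fin n) (Fin n) ℂ)
    (hA : frobNorm A ≤ n) (hB : frobNorm B ≤ C * n) (hrk : B.rank ≤ ℓ) :
    ‖(A + B).det‖ ≤
      (n : ℝ) ^ (n : ℝ) /
          (((n : ℝ) - (ℓ : ℝ)) ^ (((n : ℝ) - (ℓ : ℝ)) / 2) * (ℓ : ℝ) ^ ((ℓ : ℝ) / 2)) *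
        (1 + C) ^ ℓ := by
  obtain ⟨s, -, hs⟩ := exists_subset_card_eq (s := (univ : Finset (Fin n))) (n := n - ℓ)
    (by simp)
  obtain ⟨U, hU, hBU⟩ := B.exists_mem_unitaryGroup_mul_apply_eq_zero (s := s)
    (by rw [hs, Fintype.card_fin]; omega)
  have hker : ∑ i ∈ s, ∑ j, ‖((A + B) * U) j i‖ ^ 2 ≤ (n : ℝ) ^ 2 := by
    calc ∑ i ∈ s, ∑ j, ‖((A + B) * U) j i‖ ^ 2 = ∑ i ∈ s, ∑ j, ‖(A * U) j i‖ ^ 2 :=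
          sum_congr rfl fun i hi ↦ by simp only [add_mul, Matrix.add_apply, hBU i hi, add_zero]
      _ ≤ (n : ℝ) ^ 2 := (sum_col_norm_sq_mul_le_frobNorm_sq A hU s).trans
          (pow_le_pow_left₀ (frobNorm_nonneg A) hA 2)
  have hrest : ∑ i ∈ sᶜ, ∑ j, ‖((A + B) * U) j i‖ ^ 2 ≤ ((1 + C) * n) ^ 2 :=
    (sum_col_norm_sq_mul_le_frobNorm_sq (A + B) hU sᶜ).trans <|
      pow_le_pow_left₀ (frobNorm_nonneg _) (by linarith [frobNorm_add_le A B]) 2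
  have hdet := ((A + B) * U).norm_det_sq_le_of_sum_col_norm_sq_le s hker hrest
  have hUdet : ‖U.det‖ = 1 := CStarRing.norm_of_mem_unitary (det_of_mem_unitary hU)
  have hs_compl : #sᶜ = ℓ := by rw [card_compl, hs, Fintype.card_fin]; omega
  rw [det_mul, norm_mul, hUdet, mul_one, hs, hs_compl] at hdet
  rw [low_rank_bound_eq_div_sqrt_pow hℓ]
  have h1C : 0 ≤ 1 + C := by linarith
  refine (pow_le_pow_iff_left₀ (norm_nonneg _) (by positivity) two_ne_zero).mp ?_
  rwa [mul_pow, div_sqrt_pow_sq, div_sqrt_pow_sq]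

/-- Lemma 3.2: if `‖A‖_F ≤ n`, `‖B‖_F ≤ C n` and `rank B ≤ ℓ`, then
`|det(A+B)| ≤ n^n / ((n-ℓ)^{(n-ℓ)/2} ℓ^{ℓ/2}) · (1+C)^ℓ`
(real powers, with the convention `0^0 = 1`). -/
theorem abs_det_add_le_of_low_rank (n : ℕ) (hn : 1 ≤ n) (ℓ : ℕ) (hℓ : ℓ ≤ n)
    (C : ℝ) (hC : 0 ≤ C) (A B : Matrix (Fin n) (Fin n) ℂ)
    (hA : frobNorm A ≤ n) (hB : frobNorm B ≤ C * n) (hrk : B.rank ≤ ℓ) :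
    ‖(A + B).det‖ ≤
      (n : ℝ) ^ (n : ℝ) /
          (((n : ℝ) - (ℓ : ℝ)) ^ (((n : ℝ) - (ℓ : ℝ)) / 2) * (ℓ : ℝ) ^ ((ℓ : ℝ) / 2)) *
        (1 + C) ^ ℓ :=
  abs_det_add_le_of_low_rank_general n ℓ hℓ C hC A B hA hB hrk
end

section
/- Let A ∈ ℂ^{n×n} be nonsingular and completely pivoted with pivots p_1,...,p_n. Then for every k = 1,...,n, ∏_{i=1}^k p_i ≤ k^{k/2} · p_k^k. -/
/-!
Two ingredients. First, the Schur determinant formula `det A = det A^(k) · det A_{n-k}`, where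
`A_m` is the leading `m × m` block; applied to `A_{n-k+1}`, whose Schur complement of `A_{n-k}`
is the `1 × 1` matrix `(A^(k))_{1,1}`, it gives `p_k |det A_{n-k}| = |det A_{n-k+1}|`, and these
telescope to `p_1 ⋯ p_k = |det A^(k)|`. Second, complete pivoting bounds every entry of `A^(k)`
by `p_k`, and Hadamard's inequality in the form
`|det M|² = ∏ λ_i(MMᴴ) ≤ (tr(MMᴴ)/k)^k ≤ (k p_k²)^k` (AM–GM on the eigenvalues) finishes.
-/

open Matrix BigOperators

/-- The Gaussian elimination iterate `A^(k)`: the Schur complement of the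
leading `(n-k) × (n-k)` block of `A`. -/
noncomputable def geIter (n : ℕ) (A : Matrix (Fin n) (Fin n) ℂ) (k : ℕ) (hk : k ≤ n) :
    Matrix (Fin k) (Fin k) ℂ :=
  let f : Fin k → Fin n := fun i => ⟨n - k + i.val, by have := i.isLt; omega⟩
  let g : Fin (n - k) → Fin n := fun j => ⟨j.val, by have := j.isLt; omega⟩
  A.submatrix f f - A.submatrix f g * (A.submatrix g g)⁻¹ * A.submatrix g f

/-- The `k`-th pivot `p_k = |(A^(k))_{1,1}|` (and `0` if `k = 0` or `k > n`). -/
noncomputable def pivot (n : ℕ) (A : Matrix (Fin n) (Fin n) ℂ) (k : ℕ) : ℝ :=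
  if h : 0 < k ∧ k ≤ n then ‖geIter n A k h.2 ⟨0, h.1⟩ ⟨0, h.1⟩‖ else 0

/-- `‖M‖_max`, the maximum modulus of an entry of `M`. -/
noncomputable def maxEntry {k : ℕ} (M : Matrix (Fin k) (Fin k) ℂ) : ℝ :=
  ⨆ i : Fin k, ⨆ j : Fin k, ‖M i j‖

/-- `A` is completely pivoted: for every `k = 1, ..., n`, the pivot `p_k`
equals the maximum modulus of an entry of `A^(k)`. -/
def CompletelyPivoted (n : ℕ) (A : Matrix (Fin n) (Fin n) ℂ) : Prop :=
  ∀ (k : ℕ) (h1 : 0 < k) (h2 : k ≤ n), pivot n A k = maxEntry (geIter n A k h2)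

/-- All leading principal minors of `A` are nonzero (with `m = n` this says
`A` itself is nonsingular). -/
def LeadingMinorsNonzero (n : ℕ) (A : Matrix (Fin n) (Fin n) ℂ) : Prop :=
  ∀ (m : ℕ) (hm : m ≤ n), (A.submatrix (Fin.castLE hm) (Fin.castLE hm)).det ≠ 0

open Finset

theorem Real.prod_le_arith_mean_pow {ι : Type*} (s : Finset ι) {z : ι → ℝ}
    (hz : ∀ i ∈ s, 0 ≤ z i) :
    ∏ i ∈ s, z i ≤ ((∑ i ∈ s, z i) / #s) ^ #s := by
  rcases s.eq_empty_or_nonempty with rfl | hs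
  · simp
  have hcard : (#s : ℝ) ≠ 0 := Nat.cast_ne_zero.mpr hs.card_pos.ne'
  have amgm := Real.geom_mean_le_arith_mean_weighted s (fun _ => (#s : ℝ)⁻¹) z
    (fun _ _ => by positivity) (by simp [hcard]) hz
  rw [Real.finsetProd_rpow s z hz, ← mul_sum, inv_mul_eq_div] at amgm
  calc ∏ i ∈ s, z i = ((∏ i ∈ s, z i) ^ (#s : ℝ)⁻¹) ^ #s :=
        (Real.rpow_inv_natCast_pow (prod_nonneg hz) hs.card_pos.ne').symm
    _ ≤ _ := pow_le_pow_left₀ (Real.rpow_nonneg (prod_nonneg hz) _) amgm _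

namespace Matrix

variable {𝕜 ι : Type*} [RCLike 𝕜] [Fintype ι] [DecidableEq ι]

theorem norm_det_sq_eq_prod_eigenvalues_mul_conjTranspose_self (M : Matrix ι ι 𝕜) :
    ‖M.det‖ ^ 2 = ∏ i, (isHermitian_mul_conjTranspose_self M).eigenvalues i := by
  have h := (isHermitian_mul_conjTranspose_self M).det_eq_prod_eigenvalues
  rw [det_mul, det_conjTranspose, RCLike.star_def, RCLike.mul_conj, ← RCLike.ofReal_prod] at h
  exact_mod_cast h

theorem sum_eigenvalues_mul_conjTranspose_self (M : Matrix ι ι 𝕜) :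
    ∑ i, (isHermitian_mul_conjTranspose_self M).eigenvalues i = ∑ i, ∑ j, ‖M i j‖ ^ 2 := by
  have h := (isHermitian_mul_conjTranspose_self M).trace_eq_sum_eigenvalues
  simp only [trace, diag_apply, mul_apply, conjTranspose_apply, RCLike.star_def,
    RCLike.mul_conj] at h
  exact_mod_cast h.symm

theorem norm_det_sq_le_sum_norm_sq_div_card_pow (M : Matrix ι ι 𝕜) :
    ‖M.det‖ ^ 2 ≤ ((∑ i, ∑ j, ‖M i j‖ ^ 2) / Fintype.card ι) ^ Fintype.card ι := by
  rw [norm_det_sq_eq_prod_eigenvalues_mul_conjTranspose_self,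
    ← sum_eigenvalues_mul_conjTranspose_self]
  exact Real.prod_le_arith_mean_pow univ fun i _ => eigenvalues_self_mul_conjTranspose_nonneg M i

theorem norm_det_le_of_forall_norm_apply_le (M : Matrix ι ι 𝕜) {p : ℝ} (hp : 0 ≤ p)
    (hM : ∀ i j, ‖M i j‖ ≤ p) :
    ‖M.det‖ ≤ (Fintype.card ι : ℝ) ^ ((Fintype.card ι : ℝ) / 2) * p ^ Fintype.card ι := by
  set k := Fintype.card ι
  have hsum : ∑ i, ∑ j, ‖M i j‖ ^ 2 ≤ k * (k * p ^ 2) := by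
    simpa [k] using sum_le_sum fun i (_ : i ∈ univ) => sum_le_sum
      fun j (_ : j ∈ univ) => pow_le_pow_left₀ (norm_nonneg _) (hM i j) 2
  have hsq : ((k : ℝ) ^ ((k : ℝ) / 2)) ^ 2 = k ^ k := by
    rw [← Real.rpow_natCast, ← Real.rpow_mul (Nat.cast_nonneg k)]
    norm_num
  refine (pow_le_pow_iff_left₀ (norm_nonneg _) (by positivity) two_ne_zero).mp ?_
  calc ‖M.det‖ ^ 2 ≤ ((∑ i, ∑ j, ‖M i j‖ ^ 2) / k) ^ k :=
        norm_det_sq_le_sum_norm_sq_div_card_pow M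
    _ ≤ (k * p ^ 2) ^ k := by
        gcongr
        exact div_le_of_le_mul₀ (Nat.cast_nonneg k) (by positivity) (by linarith)
    _ = _ := by rw [mul_pow _ (p ^ k), hsq, ← pow_mul, mul_comm k, pow_mul, mul_pow]

end Matrix

-- The junk value `1` for `m > n` lets `LeadingMinorsNonzero.leadingMinor_ne_zero` hold for all `m`.
def leadingMinor {R : Type*} [CommRing R] {n : ℕ} (A : Matrix (Fin n) (Fin n) R) (m : ℕ) : R :=
  if hm : m ≤ n then (A.submatrix (Fin.castLE hm) (Fin.castLE hm)).det else 1

theorem leadingMinor_self {R : Type*} [CommRing R] {n : ℕ} (A : Matrix (Fin n) (Fin n) R) :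
    leadingMinor A n = A.det := by
  rw [leadingMinor, dif_pos le_rfl]
  rfl

theorem LeadingMinorsNonzero.leadingMinor_ne_zero {n : ℕ} {A : Matrix (Fin n) (Fin n) ℂ}
    (hA : LeadingMinorsNonzero n A) (m : ℕ) : leadingMinor A m ≠ 0 := by
  unfold leadingMinor
  split_ifs with hm
  exacts [hA m hm, one_ne_zero]

theorem det_geIter_mul_leadingMinor {n k : ℕ} (A : Matrix (Fin n) (Fin n) ℂ) (hk : k ≤ n)
    (h : leadingMinor A (n - k) ≠ 0) :
    (geIter n A k hk).det * leadingMinor A (n - k) = A.det := by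
  let e : Fin (n - k) ⊕ Fin k ≃ Fin n := finSumFinEquiv.trans (finCongr (Nat.sub_add_cancel hk))
  let g : Fin (n - k) → Fin n := Fin.castLE (Nat.sub_le n k)
  let f : Fin k → Fin n := fun i => ⟨n - k + i, by omega⟩
  have hblocks : A.submatrix e e =
      fromBlocks (A.submatrix g g) (A.submatrix g f) (A.submatrix f g) (A.submatrix f f) := by
    ext (i | i) (j | j) <;> rfl
  rw [leadingMinor, dif_pos (Nat.sub_le n k)] at h ⊢
  have : Invertible _ := invertibleOfIsUnitDet _ (isUnit_iff_ne_zero.mpr h)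
  rw [← det_submatrix_equiv_self e, hblocks, det_fromBlocks₁₁, invOf_eq_nonsing_inv, mul_comm]
  rfl

theorem pivot_mul_leadingMinor {n k : ℕ} (A : Matrix (Fin n) (Fin n) ℂ) (hk0 : 0 < k)
    (hkn : k ≤ n) (h : leadingMinor A (n - k) ≠ 0) :
    pivot n A k * ‖leadingMinor A (n - k)‖ = ‖leadingMinor A (n - k + 1)‖ := by
  have hm : n - k + 1 ≤ n := by omega
  -- `(A^(k))_{1,1}` is the `1 × 1` Schur complement of `A_{n-k}` in `A_{n-k+1}`.
  let B := A.submatrix (Fin.castLE hm) (Fin.castLE hm)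
  have hB : leadingMinor B (n - k + 1 - 1) = leadingMinor A (n - k) := by
    rw [leadingMinor, leadingMinor, dif_pos (by omega), dif_pos (by omega)]
    rfl
  have hschur := det_geIter_mul_leadingMinor B le_add_self (hB ▸ h)
  rw [det_fin_one, hB] at hschur
  rw [pivot, dif_pos ⟨hk0, hkn⟩, ← norm_mul, show leadingMinor A (n - k + 1) = B.det from
    dif_pos hm, ← hschur]
  rfl

theorem prod_pivot_mul_leadingMinor {n : ℕ} {A : Matrix (Fin n) (Fin n) ℂ}
    (hA : LeadingMinorsNonzero n A) {k : ℕ} (hk : k ≤ n) :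
    (∏ i ∈ Icc 1 k, pivot n A i) * ‖leadingMinor A (n - k)‖ = ‖A.det‖ := by
  induction k with
  | zero => simp [leadingMinor_self]
  | succ k ih =>
    rw [prod_Icc_succ_top (by omega), mul_assoc,
      pivot_mul_leadingMinor A k.succ_pos hk (hA.leadingMinor_ne_zero _),
      show n - (k + 1) + 1 = n - k by omega, ih (by omega)]

theorem prod_pivot_eq_norm_det_geIter {n : ℕ} {A : Matrix (Fin n) (Fin n) ℂ}
    (hA : LeadingMinorsNonzero n A) {k : ℕ} (hk : k ≤ n) :
    ∏ i ∈ Icc 1 k, pivot n A i = ‖(geIter n A k hk).det‖ := by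
  refine mul_right_cancel₀ (norm_ne_zero_iff.mpr (hA.leadingMinor_ne_zero (n - k))) ?_
  rw [prod_pivot_mul_leadingMinor hA hk, ← norm_mul,
    det_geIter_mul_leadingMinor A hk (hA.leadingMinor_ne_zero _)]

theorem norm_le_maxEntry {k : ℕ} (M : Matrix (Fin k) (Fin k) ℂ) (i j : Fin k) :
    ‖M i j‖ ≤ maxEntry M :=
  (le_ciSup (Set.finite_range _).bddAbove j).trans
    (le_ciSup (f := fun i => ⨆ j, ‖M i j‖) (Set.finite_range _).bddAbove i)

/-- Wilkinson's constraint: for a completely pivoted nonsingular matrix,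
`∏_{i=1}^k p_i ≤ k^{k/2} p_k^k` for every `k = 1, ..., n`. -/
theorem prod_pivot_le_hadamard (n : ℕ) (A : Matrix (Fin n) (Fin n) ℂ)
    (hns : LeadingMinorsNonzero n A) (hcp : CompletelyPivoted n A)
    (k : ℕ) (hk1 : 1 ≤ k) (hkn : k ≤ n) :
    ∏ i ∈ Finset.Icc 1 k, pivot n A i ≤ (k : ℝ) ^ ((k : ℝ) / 2) * pivot n A k ^ k := by
  have hbound : ∀ i j, ‖geIter n A k hkn i j‖ ≤ pivot n A k := fun i j =>
    hcp k hk1 hkn ▸ norm_le_maxEntry _ i j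
  have hpivot : 0 ≤ pivot n A k := (norm_nonneg _).trans (hbound ⟨0, hk1⟩ ⟨0, hk1⟩)
  rw [prod_pivot_eq_norm_det_geIter hns hkn]
  simpa using norm_det_le_of_forall_norm_apply_le (geIter n A k hkn) hpivot hbound
end

section
/- Let n ≥ 1 and let q_1,...,q_n be feasible for Wilkinson's linear program. Then q_1 − q_n ≤ (1/2)·(ln n + ∑_{k=2}^n (ln k)/(k−1)). -/
open BigOperators

/-- `q 1, ..., q n` is feasible for Wilkinson's linear program:
`∑_{i=1}^k q_i ≤ (k/2) ln k + k q_k` for every `k = 1, ..., n`. -/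
def WilkFeasible (n : ℕ) (q : ℕ → ℝ) : Prop :=
  ∀ k : ℕ, 1 ≤ k → k ≤ n →
    ∑ i ∈ Finset.Icc 1 k, q i ≤ ((k : ℝ) / 2) * Real.log k + (k : ℝ) * q k

/-!
Let `A k = (q 1 + ⋯ + q k) / k` be the running mean, so `A 1 = q 1`. The constraint at `k + 1`
says exactly that the mean drops by at most `ln (k + 1) / (2k)` from `k` to `k + 1`, and the
constraint at `n` says `A n - q n ≤ ln n / 2`. Telescoping `A 1 - A n` gives the bound.
-/

open Finset Real

theorem sub_le_sum_Icc_of_sub_succ_le {a b : ℕ → ℝ} {n : ℕ} (hn : 1 ≤ n)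
    (h : ∀ k, 1 ≤ k → k + 1 ≤ n → a k - a (k + 1) ≤ b (k + 1)) :
    a 1 - a n ≤ ∑ k ∈ Icc 2 n, b k := by
  induction n, hn using Nat.le_induction with
  | base => simp
  | succ m hm ih =>
    rw [sum_Icc_succ_top (by omega)]
    linarith [ih fun k hk hkm => h k hk (by omega), h m hm le_rfl]

noncomputable def runningMean (q : ℕ → ℝ) (k : ℕ) : ℝ :=
  (∑ i ∈ Icc 1 k, q i) / k

theorem runningMean_one (q : ℕ → ℝ) : runningMean q 1 = q 1 := by
  simp [runningMean]

namespace WilkFeasible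

variable {n : ℕ} {q : ℕ → ℝ}

theorem runningMean_sub_le (hq : WilkFeasible n q) {k : ℕ} (hk : 1 ≤ k) (hkn : k ≤ n) :
    runningMean q k - q k ≤ log k / 2 := by
  have hk₀ : (0 : ℝ) < k := by exact_mod_cast hk
  rw [runningMean, sub_le_iff_le_add, div_le_iff₀ hk₀]
  linarith [hq k hk hkn]

theorem runningMean_sub_runningMean_succ_le (hq : WilkFeasible n q) {k : ℕ} (hk : 1 ≤ k)
    (hkn : k + 1 ≤ n) :
    runningMean q k - runningMean q (k + 1) ≤ log (k + 1) / (2 * k) := by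
  have hk₀ : (0 : ℝ) < k := by exact_mod_cast hk
  set S := ∑ i ∈ Icc 1 k, q i
  have hsucc : ∑ i ∈ Icc 1 (k + 1), q i = S + q (k + 1) := sum_Icc_succ_top (by omega) q
  have hcon : S - k * q (k + 1) ≤ (k + 1) / 2 * log (k + 1) := by
    have := hq (k + 1) (by omega) hkn
    push_cast at this
    linarith
  calc runningMean q k - runningMean q (k + 1)
      = (S - k * q (k + 1)) / (k * (k + 1)) := by
        rw [runningMean, runningMean, hsucc]
        push_cast
        field_simp
        ring
    _ ≤ (k + 1) / 2 * log (k + 1) / (k * (k + 1)) := by gcongr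
    _ = log (k + 1) / (2 * k) := by field_simp

end WilkFeasible

/-- Wilkinson's LP bound: any feasible point satisfies
`q_1 - q_n ≤ (1/2)(ln n + ∑_{k=2}^n (ln k)/(k-1))`. -/
theorem wilk_lp_bound (n : ℕ) (hn : 1 ≤ n) (q : ℕ → ℝ) (hq : WilkFeasible n q) :
    q 1 - q n ≤
      (1 / 2) * (Real.log n + ∑ k ∈ Finset.Icc 2 n, Real.log k / ((k : ℝ) - 1)) := by
  have hdrop : runningMean q 1 - runningMean q n ≤
      ∑ k ∈ Icc 2 n, 1 / 2 * (log k / ((k : ℝ) - 1)) :=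
    sub_le_sum_Icc_of_sub_succ_le hn fun k hk hkn =>
      (hq.runningMean_sub_runningMean_succ_le hk hkn).trans_eq (by push_cast; ring)
  have hlast := hq.runningMean_sub_le hn le_rfl
  rw [runningMean_one] at hdrop
  rw [mul_add, mul_sum]
  linarith
end

section
/- For every n ≥ 1 there exist real numbers q_1,...,q_n feasible for Wilkinson's linear program with q_1 − q_n = (1/2)·(ln n + ∑_{k=2}^n (ln k)/(k−1)); that is, the bound (1/2)·(ln n + ∑_{k=2}^n (ln k)/(k−1)) is the exact optimal value of Wilkinson's linear program. -/
/-!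
The optimum is attained by making every constraint tight. Writing `H k = ∑_{j=2}^k ln j / (j-1)`,
the point `q_k = -(H k + ln k) / 2` has partial sums `∑_{i ≤ k} q_i = -k H k / 2`, because
`k (H (k+1) - H k) = ln (k+1)`; with these partial sums each constraint holds with equality,
and `q_1 = 0`, `q_n = -(H n + ln n) / 2`.
-/

open BigOperators

open Finset Real

noncomputable def wilkinsonSum (n : ℕ) : ℝ :=
  ∑ k ∈ Icc 2 n, log k / ((k : ℝ) - 1)

noncomputable def wilkinsonPoint (k : ℕ) : ℝ :=
  -(wilkinsonSum k + log k) / 2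

lemma natCast_mul_wilkinsonSum_succ (k : ℕ) :
    (k : ℝ) * wilkinsonSum (k + 1) = k * wilkinsonSum k + log (k + 1) := by
  rcases Nat.eq_zero_or_pos k with rfl | hk
  · simp
  · have hk' : (k : ℝ) ≠ 0 := by positivity
    rw [wilkinsonSum, sum_Icc_succ_top (by omega), ← wilkinsonSum]
    push_cast
    rw [add_sub_cancel_right, mul_add, mul_div_cancel₀ _ hk']

lemma sum_Icc_wilkinsonPoint (k : ℕ) :
    ∑ i ∈ Icc 1 k, wilkinsonPoint i = -(k * wilkinsonSum k) / 2 := by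
  induction k with
  | zero => simp
  | succ k ih =>
    rw [sum_Icc_succ_top (by omega), ih, wilkinsonPoint]
    push_cast
    linear_combination (1 / 2 : ℝ) * natCast_mul_wilkinsonSum_succ k

lemma sum_Icc_wilkinsonPoint_eq (k : ℕ) :
    ∑ i ∈ Icc 1 k, wilkinsonPoint i = ((k : ℝ) / 2) * log k + (k : ℝ) * wilkinsonPoint k := by
  rw [sum_Icc_wilkinsonPoint, wilkinsonPoint]
  ring

lemma wilkFeasible_wilkinsonPoint (n : ℕ) : WilkFeasible n wilkinsonPoint :=
  fun k _ _ => (sum_Icc_wilkinsonPoint_eq k).le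

lemma wilkinsonPoint_one : wilkinsonPoint 1 = 0 := by
  simp [wilkinsonPoint, wilkinsonSum]

theorem wilk_lp_bound_tight_general (n : ℕ) :
    ∃ q : ℕ → ℝ, WilkFeasible n q ∧
      q 1 - q n =
        (1 / 2) * (Real.log n + ∑ k ∈ Finset.Icc 2 n, Real.log k / ((k : ℝ) - 1)) := by
  refine ⟨wilkinsonPoint, wilkFeasible_wilkinsonPoint n, ?_⟩
  rw [wilkinsonPoint_one, wilkinsonPoint, wilkinsonSum]
  ring

/-- The bound `(1/2)(ln n + ∑_{k=2}^n (ln k)/(k-1))` is attained: there is a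
feasible point of Wilkinson's linear program achieving it, so it is the exact
optimal value. -/
theorem wilk_lp_bound_tight (n : ℕ) (hn : 1 ≤ n) :
    ∃ q : ℕ → ℝ, WilkFeasible n q ∧
      q 1 - q n =
        (1 / 2) * (Real.log n + ∑ k ∈ Finset.Icc 2 n, Real.log k / ((k : ℝ) - 1)) :=
  wilk_lp_bound_tight_general n
end

section
/- Let n ≥ 1 and let q_1,...,q_n be feasible for Wilkinson's linear program. Then (1/n)·∑_{k=1}^n (q_1 − q_k) ≤ (1/2)·∑_{k=2}^n (ln k)/(k−1) ≤ (ln² n)/4 + ln 2. -/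
/-!
Let `a m` be the average of `q 1 - q k` over `k ≤ m`. Rewritten in terms of the averages, the
constraint at `k = m + 1` says exactly `a (m + 1) - a m ≤ ln (m + 1) / (2 m)`, and the first
inequality follows by telescoping.

For the second, put `H n = ∑_{k=2}^n ln k / (k - 1)`. The quantity
`H n - (ln n)² / 2 + ln (8 (n + 1)) / (2 n)` is nonincreasing for `n ≥ 1` and equals `2 ln 2`
at `n = 1`. Its monotonicity is an elementary inequality in `x = n`, which follows from the
bounds `2 / (2x + 1) ≤ ln (1 + 1/x) ≤ (2x + 1) / (2x (x + 1))`; both are exact up to third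
order in `1/x`, and that precision is needed.
-/

open Real Finset

namespace Real

theorem log_le_half_sub_inv {y : ℝ} (hy : 1 ≤ y) : log y ≤ (y - y⁻¹) / 2 := by
  rw [← sinh_log (by positivity)]
  exact self_le_sinh_iff.mpr (log_nonneg hy)

theorem two_div_le_log_add_one_sub_log {x : ℝ} (hx : 0 < x) :
    2 / (2 * x + 1) ≤ log (x + 1) - log x := by
  rw [← log_div (by positivity) hx.ne', show (x + 1) / x = 1 + x⁻¹ by field_simp]
  convert le_log_one_add_of_nonneg (inv_nonneg.mpr hx.le) using 1
  field_simp
  ring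

theorem log_add_one_sub_log_le {x : ℝ} (hx : 0 < x) :
    log (x + 1) - log x ≤ (2 * x + 1) / (2 * x * (x + 1)) := by
  rw [← log_div (by positivity) hx.ne']
  convert log_le_half_sub_inv (y := (x + 1) / x) (by rw [le_div_iff₀ hx]; linarith) using 1
  field_simp
  ring

end Real

/-- The monotonicity step cleared of denominators, with `L = ln (x + 1)`, `δ = ln (x + 1) - ln x`,
`δ' = ln (x + 2) - ln (x + 1)` and `c = ln 8`. At `x → ∞` the bounds give `33/16` against
`c ≈ 2.0794`, which is why `c` is needed to three decimals. -/
theorem step_bound_of_log_bounds {x L δ δ' c : ℝ} (hx : 1 ≤ x) (hc : 2.079 < c)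
    (hL₀ : 0 ≤ L) (hL : L ≤ (x + 1) / 8 + c - 1)
    (hδ_lo : 2 / (2 * x + 1) ≤ δ) (hδ_hi : δ ≤ (2 * x + 1) / (2 * x * (x + 1)))
    (hδ' : δ' ≤ (2 * x + 3) / (2 * (x + 1) * (x + 2))) :
    L * (2 * x + 1 - 2 * x * (x + 1) * δ) + x * δ' + x * (x + 1) * δ ^ 2 ≤ c := by
  have hx₀ : 0 < x := by linarith
  have hδ₀ : 0 ≤ δ := le_trans (by positivity) hδ_lo
  have hcoef : 2 * x + 1 - 2 * x * (x + 1) * δ ≤ 1 / (2 * x + 1) := by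
    have := mul_le_mul_of_nonneg_left hδ_lo (by positivity : 0 ≤ 2 * x * (x + 1))
    have e : 2 * x + 1 - 2 * x * (x + 1) * (2 / (2 * x + 1)) = 1 / (2 * x + 1) := by
      field_simp; ring
    linarith
  have hLcoef : L * (2 * x + 1 - 2 * x * (x + 1) * δ) ≤ ((x + 1) / 8 + c - 1) / (2 * x + 1) :=
    calc L * (2 * x + 1 - 2 * x * (x + 1) * δ) ≤ L * (1 / (2 * x + 1)) := by gcongr
      _ ≤ ((x + 1) / 8 + c - 1) * (1 / (2 * x + 1)) := by gcongr
      _ = _ := by ring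
  have hrational : ((x + 1) / 8 + c - 1) / (2 * x + 1) + (2 * x + 1) ^ 2 / (4 * x * (x + 1))
      + x * (2 * x + 3) / (2 * (x + 1) * (x + 2)) ≤ c := by
    rw [div_add_div _ _ (by positivity) (by positivity),
      div_add_div _ _ (by positivity) (by positivity), div_le_iff₀ (by positivity)]
    obtain ⟨t, ht, rfl⟩ : ∃ t, 0 ≤ t ∧ x = 1 + t := ⟨x - 1, by linarith, by ring⟩
    have hc' : 0 < c - 2.079 := by linarith
    nlinarith [mul_pos hc' (by positivity : (0 : ℝ) < (1 + t) ^ 2 * (2 + t) * (3 + t) * (3 + 2 * t)),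
      mul_nonneg ht ht, pow_nonneg ht 3, pow_nonneg ht 4, pow_nonneg ht 5, pow_nonneg ht 6]
  calc L * (2 * x + 1 - 2 * x * (x + 1) * δ) + x * δ' + x * (x + 1) * δ ^ 2
      ≤ ((x + 1) / 8 + c - 1) / (2 * x + 1) + x * ((2 * x + 3) / (2 * (x + 1) * (x + 2)))
        + x * (x + 1) * ((2 * x + 1) / (2 * x * (x + 1))) ^ 2 := by gcongr
    _ = ((x + 1) / 8 + c - 1) / (2 * x + 1) + (2 * x + 1) ^ 2 / (4 * x * (x + 1))
        + x * (2 * x + 3) / (2 * (x + 1) * (x + 2)) := by field_simp; ring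
    _ ≤ c := hrational

theorem log_add_one_div_add_le {x : ℝ} (hx : 1 ≤ x) :
    log (x + 1) / x + log (8 * (x + 2)) / (2 * (x + 1)) ≤
      (log (x + 1) ^ 2 - log x ^ 2) / 2 + log (8 * (x + 1)) / (2 * x) := by
  have hx₀ : 0 < x := by linarith
  have hδ' : log (x + 2) - log (x + 1) ≤ (2 * x + 3) / (2 * (x + 1) * (x + 2)) := by
    convert log_add_one_sub_log_le (x := x + 1) (by linarith) using 2 <;> ring_nf
  have hL : log (x + 1) ≤ (x + 1) / 8 + log 8 - 1 := by
    have := log_le_sub_one_of_pos (show 0 < (x + 1) / 8 by positivity)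
    rw [log_div (by positivity) (by norm_num)] at this
    linarith
  have hc : 2.079 < log 8 := by
    rw [show (8 : ℝ) = 2 ^ 3 by norm_num, log_pow]
    linarith [log_two_gt_d9]
  have key := step_bound_of_log_bounds hx hc (log_nonneg (by linarith)) hL
    (two_div_le_log_add_one_sub_log hx₀) (log_add_one_sub_log_le hx₀) hδ'
  rw [log_mul (by norm_num) (by positivity), log_mul (by norm_num) (by positivity), ← sub_nonneg]
  have e : (log (x + 1) ^ 2 - log x ^ 2) / 2 + (log 8 + log (x + 1)) / (2 * x)
      - (log (x + 1) / x + (log 8 + log (x + 2)) / (2 * (x + 1)))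
      = (log 8 - (log (x + 1) * (2 * x + 1 - 2 * x * (x + 1) * (log (x + 1) - log x))
          + x * (log (x + 2) - log (x + 1)) + x * (x + 1) * (log (x + 1) - log x) ^ 2))
        / (2 * x * (x + 1)) := by
    field_simp; ring
  rw [e]
  exact div_nonneg (by linarith) (by positivity)

theorem sum_log_div_sub_one_add_le {n : ℕ} (hn : 1 ≤ n) :
    ∑ k ∈ Icc 2 n, log k / ((k : ℝ) - 1) + log (8 * (n + 1)) / (2 * n) ≤
      log n ^ 2 / 2 + 2 * log 2 := by
  induction n, hn using Nat.le_induction with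
  | base =>
    have : log 16 = 4 * log 2 := by
      rw [show (16 : ℝ) = 2 ^ 4 by norm_num, log_pow]; norm_num
    norm_num [this]
    linarith
  | succ n hn ih =>
    have step := log_add_one_div_add_le (x := n) (by exact_mod_cast hn)
    rw [sum_Icc_succ_top (by omega)]
    push_cast
    rw [show (n : ℝ) + 1 - 1 = n by ring, show (n : ℝ) + 1 + 1 = n + 2 by ring]
    linarith

theorem sum_log_div_sub_one_le (n : ℕ) :
    ∑ k ∈ Icc 2 n, log k / ((k : ℝ) - 1) ≤ log n ^ 2 / 2 + 2 * log 2 := by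
  rcases Nat.eq_zero_or_pos n with rfl | hn
  · simp [log_nonneg one_le_two]
  have hg : 0 ≤ log (8 * (n + 1)) / (2 * n) :=
    div_nonneg (log_nonneg (by linarith)) (by positivity)
  linarith [sum_log_div_sub_one_add_le hn]

theorem average_sub_succ_le {q : ℕ → ℝ} {n : ℕ} (hn : n ≠ 0) {b : ℝ}
    (h : ∑ i ∈ Icc 1 (n + 1), q i ≤ b + (n + 1) * q (n + 1)) :
    (1 / (n + 1 : ℝ)) * ∑ k ∈ Icc 1 (n + 1), (q 1 - q k) ≤
      (1 / n) * ∑ k ∈ Icc 1 n, (q 1 - q k) + b / ((n + 1) * n) := by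
  have hn' : (0 : ℝ) < n := by positivity
  set S := ∑ k ∈ Icc 1 n, (q 1 - q k)
  have hS : ∑ i ∈ Icc 1 n, q i = n * q 1 - S := by simp [S, sum_sub_distrib]
  rw [sum_Icc_succ_top (by omega), hS] at h
  rw [sum_Icc_succ_top (by omega), ← sub_nonneg]
  have e : (1 / n) * S + b / ((n + 1) * n) - 1 / (n + 1) * (S + (q 1 - q (n + 1)))
      = (S + b - n * (q 1 - q (n + 1))) / ((n + 1) * n) := by
    field_simp; ring
  rw [e]
  exact div_nonneg (by linarith) (by positivity)

theorem average_sub_le_sum {q f : ℕ → ℝ} {n : ℕ}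
    (h : ∀ k, 1 ≤ k → k ≤ n → ∑ i ∈ Icc 1 k, q i ≤ f k + k * q k) :
    (1 / (n : ℝ)) * ∑ k ∈ Icc 1 n, (q 1 - q k) ≤ ∑ k ∈ Icc 2 n, f k / (k * (k - 1)) := by
  induction n with
  | zero => simp
  | succ n ih =>
    rcases Nat.eq_zero_or_pos n with rfl | hn
    · simp
    have step := average_sub_succ_le hn.ne' (by exact_mod_cast h (n + 1) (by omega) le_rfl)
    specialize ih fun k hk hkn ↦ h k hk (by omega)
    rw [sum_Icc_succ_top (show 2 ≤ n + 1 by omega)]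
    push_cast
    rw [add_sub_cancel_right]
    linarith

theorem wilk_geomean_bound_general (n : ℕ) (q : ℕ → ℝ) (hq : WilkFeasible n q) :
    (1 / (n : ℝ)) * ∑ k ∈ Finset.Icc 1 n, (q 1 - q k) ≤
        (1 / 2) * ∑ k ∈ Finset.Icc 2 n, Real.log k / ((k : ℝ) - 1) ∧
      (1 / 2) * ∑ k ∈ Finset.Icc 2 n, Real.log k / ((k : ℝ) - 1) ≤
        Real.log n ^ 2 / 4 + Real.log 2 := by
  refine ⟨?_, by linarith [sum_log_div_sub_one_le n]⟩
  calc (1 / (n : ℝ)) * ∑ k ∈ Icc 1 n, (q 1 - q k)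
      ≤ ∑ k ∈ Icc 2 n, (k : ℝ) / 2 * log k / (k * (k - 1)) := average_sub_le_sum hq
    _ = (1 / 2) * ∑ k ∈ Icc 2 n, log k / ((k : ℝ) - 1) := by
      rw [mul_sum]
      refine sum_congr rfl fun k hk ↦ ?_
      have hk : (k : ℝ) ≠ 0 := by have := (mem_Icc.mp hk).1; positivity
      field_simp

/-- Geometric mean growth bound (Inequality 2.6): for any feasible point of
Wilkinson's linear program,
`(1/n) ∑_{k=1}^n (q_1 - q_k) ≤ (1/2) ∑_{k=2}^n (ln k)/(k-1) ≤ (ln² n)/4 + ln 2`. -/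
theorem wilk_geomean_bound (n : ℕ) (hn : 1 ≤ n) (q : ℕ → ℝ) (hq : WilkFeasible n q) :
    (1 / (n : ℝ)) * ∑ k ∈ Finset.Icc 1 n, (q 1 - q k) ≤
        (1 / 2) * ∑ k ∈ Finset.Icc 2 n, Real.log k / ((k : ℝ) - 1) ∧
      (1 / 2) * ∑ k ∈ Finset.Icc 2 n, Real.log k / ((k : ℝ) - 1) ≤
        Real.log n ^ 2 / 4 + Real.log 2 :=
  wilk_geomean_bound_general n q hq
end
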